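/- arXiv:1501.06779 — 4 statements merged into one kernel-verified Lean document; each statement's English description precedes it below -/
import Mathlib

section
/- Let γ : [0, L] → S^n be a C² closed curve of length L parametrized by arc length, with geodesic curvature k in S^n, and let a₀ ≥ 2 be a constant. Then ∫₀^L (k(s)² + a₀) ds ≥ 4π√(a₀ − 1). -/
/-!
On the unit sphere a unit-speed curve satisfies `⟪γ, γ''⟫ = -‖γ'‖² = -1`, so `k² = ‖γ''‖² - 1` and,
by AM–GM, `k² + a₀ = ‖γ''‖² + (a₀ - 1) ≥ 2 √(a₀ - 1) ‖γ''‖`. It remains to prove Fenchel's bound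
`∫ ‖γ''‖ ≥ 2π` for the tangent indicatrix `T = γ'`, a closed curve on the unit sphere of length
`K = ∫ ‖T'‖`. Let `s₁` halve that length and `m = T 0 + T s₁`. As `∫ ⟪T, m⟫ = ⟪γ L - γ 0, m⟫ = 0`,
some `T s₀` is orthogonal to `m`, and then the spherical distances from `T s₀` to `T 0` and to
`T s₁` add up to `π`. Spherical distance is at most arc length, so the half of the loop through
`s₀` has length `K / 2 ≥ π`.
-/

open Real intervalIntegral

open scoped RealInnerProductSpace

variable {F : Type*} [NormedAddCommGroup F] [InnerProductSpace ℝ F]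

theorem inner_eq_zero_of_hasDerivAt_of_norm_eq {σ σ' : ℝ → F} {r : ℝ}
    (hσ : ∀ t, HasDerivAt σ (σ' t) t) (hr : ∀ t, ‖σ t‖ = r) (s : ℝ) : ⟪σ s, σ' s⟫ = 0 := by
  have hconst : HasDerivAt (‖σ ·‖ ^ 2) 0 s := by
    simpa only [hr] using hasDerivAt_const s (r ^ 2)
  simpa using (hσ s).norm_sq.unique hconst

theorem inner_eq_neg_norm_sq_of_hasDerivAt_of_inner_eq_zero {σ σ' σ'' : ℝ → F}
    (hσ : ∀ t, HasDerivAt σ (σ' t) t) (hσ' : ∀ t, HasDerivAt σ' (σ'' t) t)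
    (horth : ∀ t, ⟪σ t, σ' t⟫ = 0) (s : ℝ) : ⟪σ s, σ'' s⟫ = -‖σ' s‖ ^ 2 := by
  have hconst : HasDerivAt (fun t ↦ ⟪σ t, σ' t⟫) 0 s := by
    simpa only [horth] using hasDerivAt_const s (0 : ℝ)
  have h := ((hσ s).inner ℝ (hσ' s)).unique hconst
  rw [real_inner_self_eq_norm_sq] at h
  linarith

theorem norm_add_sq_eq_norm_sq_sub_one_of_hasDerivAt {σ σ' σ'' : ℝ → F}
    (hσ : ∀ t, HasDerivAt σ (σ' t) t) (hσ' : ∀ t, HasDerivAt σ' (σ'' t) t)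
    (hsph : ∀ t, ‖σ t‖ = 1) (hunit : ∀ t, ‖σ' t‖ = 1) (s : ℝ) :
    ‖σ'' s + σ s‖ ^ 2 = ‖σ'' s‖ ^ 2 - 1 := by
  rw [norm_add_sq_real, hsph, real_inner_comm, inner_eq_neg_norm_sq_of_hasDerivAt_of_inner_eq_zero
    hσ hσ' (inner_eq_zero_of_hasDerivAt_of_norm_eq hσ hsph), hunit]
  ring

theorem inner_sq_le_norm_sq_mul_sub_inner_sq {x u v : F} (hu : ‖u‖ = 1) (huv : ⟪u, v⟫ = 0) :
    ⟪x, v⟫ ^ 2 ≤ ‖v‖ ^ 2 * (‖x‖ ^ 2 - ⟪x, u⟫ ^ 2) := by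
  set t := ⟪x, u⟫
  have hproj : ⟪x, v⟫ = ⟪x - t • u, v⟫ := by
    rw [inner_sub_left, real_inner_smul_left, huv, mul_zero, sub_zero]
  have hnorm : ‖x - t • u‖ ^ 2 = ‖x‖ ^ 2 - t ^ 2 := by
    rw [norm_sub_sq_real, real_inner_smul_right, norm_smul, hu, Real.norm_eq_abs]
    simp only [mul_one, sq_abs]
    ring
  calc ⟪x, v⟫ ^ 2 = ⟪x - t • u, v⟫ ^ 2 := by rw [hproj]
    _ ≤ (‖x - t • u‖ * ‖v‖) ^ 2 := by
      rw [← sq_abs]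
      gcongr
      exact abs_real_inner_le_norm _ _
    _ = ‖v‖ ^ 2 * (‖x‖ ^ 2 - t ^ 2) := by rw [mul_pow, hnorm]; ring

theorem abs_mul_inner_le_norm_mul_sqrt {x u v : F} {c : ℝ} (hx : ‖x‖ = 1) (hu : ‖u‖ = 1)
    (huv : ⟪u, v⟫ = 0) (hc : |c| ≤ 1) :
    |c * ⟪x, v⟫| ≤ ‖v‖ * √(1 - (c * ⟪x, u⟫) ^ 2) := by
  have hc2 : 0 ≤ 1 - c ^ 2 := by rwa [sub_nonneg, sq_le_one_iff_abs_le_one]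
  have hsq := inner_sq_le_norm_sq_mul_sub_inner_sq (x := x) hu huv
  rw [hx, one_pow] at hsq
  rw [← Real.sqrt_sq (norm_nonneg v), ← Real.sqrt_mul (sq_nonneg _)]
  apply Real.abs_le_sqrt
  calc (c * ⟪x, v⟫) ^ 2 = c ^ 2 * ⟪x, v⟫ ^ 2 := mul_pow _ _ _
    _ ≤ c ^ 2 * (‖v‖ ^ 2 * (1 - ⟪x, u⟫ ^ 2)) := by gcongr
    _ ≤ ‖v‖ ^ 2 * (1 - (c * ⟪x, u⟫) ^ 2) := by nlinarith [mul_nonneg (sq_nonneg ‖v‖) hc2]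

theorem arccos_inner_add_arccos_inner_eq_pi {p q w : F} (h : ⟪w, p + q⟫ = 0) :
    arccos ⟪p, w⟫ + arccos ⟪w, q⟫ = π := by
  rw [inner_add_right] at h
  rw [real_inner_comm w p, show ⟪w, q⟫ = -⟪w, p⟫ by linarith, arccos_neg]
  ring

section SphericalCurve

variable {σ σ' : ℝ → F} {ℓ : ℝ → ℝ}

theorem antitone_arccos_mul_inner_sub (hσ : ∀ t, HasDerivAt σ (σ' t) t)
    (hunit : ∀ t, ‖σ t‖ = 1) (hℓ : ∀ t, HasDerivAt ℓ ‖σ' t‖ t) {x : F} (hx : ‖x‖ = 1) {c : ℝ}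
    (hc : |c| < 1) : Antitone fun t ↦ arccos (c * ⟪x, σ t⟫) - ℓ t := by
  have hlt : ∀ t, |c * ⟪x, σ t⟫| < 1 := fun t ↦ by
    have : |⟪x, σ t⟫| ≤ 1 := by simpa [hx, hunit t] using abs_real_inner_le_norm x (σ t)
    rw [abs_mul]
    nlinarith [abs_nonneg c, abs_nonneg ⟪x, σ t⟫]
  refine antitone_of_hasDerivAt_nonpos
    (f' := fun t ↦ -(c * ⟪x, σ' t⟫) / √(1 - (c * ⟪x, σ t⟫) ^ 2) - ‖σ' t‖)
    (fun t ↦ ?_) (fun t ↦ ?_)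
  · obtain ⟨h₁, h₂⟩ := abs_lt.1 (hlt t)
    have h := ((hasDerivAt_arccos h₁.ne' h₂.ne).comp t
      (((hasDerivAt_const t x).inner ℝ (hσ t)).const_mul c)).sub (hℓ t)
    rw [inner_zero_left, add_zero] at h
    exact h.congr_deriv (by ring)
  · have hpos : 0 < √(1 - (c * ⟪x, σ t⟫) ^ 2) := by
      rw [Real.sqrt_pos, sub_pos, ← sq_abs]
      nlinarith [hlt t, abs_nonneg (c * ⟪x, σ t⟫)]
    have hbound := abs_mul_inner_le_norm_mul_sqrt hx (hunit t)
      (inner_eq_zero_of_hasDerivAt_of_norm_eq hσ hunit t) hc.le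
    rw [Pi.zero_apply, sub_nonpos, div_le_iff₀ hpos]
    exact (neg_le_abs _).trans hbound

theorem arccos_inner_le_sub (hσ : ∀ t, HasDerivAt σ (σ' t) t) (hunit : ∀ t, ‖σ t‖ = 1)
    (hℓ : ∀ t, HasDerivAt ℓ ‖σ' t‖ t) {a b : ℝ} (hab : a ≤ b) :
    arccos ⟪σ a, σ b⟫ ≤ ℓ b - ℓ a := by
  -- `arccos` is not differentiable at `±1`, so we smooth it to `arccos (c * ·)` and let `c → 1`.
  have hsmooth : ∀ c ∈ Set.Ioo (0 : ℝ) 1,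
      arccos (c * ⟪σ a, σ b⟫) ≤ arccos c + (ℓ b - ℓ a) := by
    intro c ⟨hc₀, hc₁⟩
    have h := antitone_arccos_mul_inner_sub hσ hunit hℓ (hunit a)
      (abs_lt.2 ⟨by linarith, hc₁⟩) hab
    simp only [real_inner_self_eq_norm_sq, hunit a, one_pow, mul_one] at h
    linarith
  have hclosed : IsClosed {c : ℝ | arccos (c * ⟪σ a, σ b⟫) ≤ arccos c + (ℓ b - ℓ a)} :=
    isClosed_le (by fun_prop) (by fun_prop)
  have hone : (1 : ℝ) ∈ closure (Set.Ioo 0 1) := by simp [closure_Ioo zero_ne_one]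
  simpa using hclosed.closure_subset_iff.2 hsmooth hone

theorem pi_le_sub_of_inner_add_eq_zero (hσ : ∀ t, HasDerivAt σ (σ' t) t)
    (hunit : ∀ t, ‖σ t‖ = 1) (hℓ : ∀ t, HasDerivAt ℓ ‖σ' t‖ t) {a b s : ℝ} (has : a ≤ s)
    (hsb : s ≤ b) (h : ⟪σ s, σ a + σ b⟫ = 0) : π ≤ ℓ b - ℓ a := by
  have h₁ := arccos_inner_le_sub hσ hunit hℓ has
  have h₂ := arccos_inner_le_sub hσ hunit hℓ hsb
  linarith [arccos_inner_add_arccos_inner_eq_pi h]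

end SphericalCurve

theorem exists_inner_eq_zero_of_hasDerivAt_of_eq {γ T : ℝ → F} {L : ℝ} (hL : 0 < L)
    (hγ : ∀ t, HasDerivAt γ (T t) t) (hT : Continuous T) (hγL : γ L = γ 0) (m : F) :
    ∃ s ∈ Set.Icc 0 L, ⟪T s, m⟫ = 0 := by
  have hcont : Continuous fun t ↦ ⟪T t, m⟫ := by fun_prop
  have hint : ∫ t in (0 : ℝ)..L, ⟪T t, m⟫ = 0 := by
    rw [integral_eq_sub_of_hasDerivAt (f := fun t ↦ ⟪γ t, m⟫)
      (fun t _ ↦ ((hγ t).inner ℝ (hasDerivAt_const t m)).congr_deriv (by simp))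
      (hcont.intervalIntegrable 0 L), hγL, sub_self]
  obtain ⟨s, hs, hval⟩ := exists_eq_interval_average hL.ne hcont.continuousOn
  rw [Set.uIoo_of_le hL.le] at hs
  exact ⟨s, Set.Ioo_subset_Icc_self hs, by simp [hval, interval_average_eq_div, hint]⟩

theorem two_pi_le_integral_norm_deriv {γ T T' : ℝ → F} {L : ℝ} (hL : 0 < L)
    (hγ : ∀ t, HasDerivAt γ (T t) t) (hT : ∀ t, HasDerivAt T (T' t) t) (hT' : Continuous T')
    (hunit : ∀ t, ‖T t‖ = 1) (hγL : γ L = γ 0) (hTL : T L = T 0) :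
    2 * π ≤ ∫ t in (0 : ℝ)..L, ‖T' t‖ := by
  set ℓ : ℝ → ℝ := fun s ↦ ∫ t in (0 : ℝ)..s, ‖T' t‖
  have hℓ : ∀ s, HasDerivAt ℓ ‖T' s‖ s := fun s ↦
    (hT'.norm.integral_hasStrictDerivAt 0 s).hasDerivAt
  have hℓ0 : ℓ 0 = 0 := integral_same
  have hℓL : 0 ≤ ℓ L := integral_nonneg hL.le fun _ _ ↦ norm_nonneg _
  obtain ⟨s₁, -, hhalf⟩ : ∃ s₁ ∈ Set.Icc 0 L, ℓ s₁ = ℓ L / 2 :=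
    intermediate_value_Icc hL.le
      (continuous_iff_continuousAt.2 fun s ↦ (hℓ s).continuousAt).continuousOn
      ⟨by linarith, by linarith⟩
  obtain ⟨s₀, hs₀, horth⟩ := exists_inner_eq_zero_of_hasDerivAt_of_eq hL hγ
    (continuous_iff_continuousAt.2 fun s ↦ (hT s).continuousAt) hγL (T 0 + T s₁)
  have hpi_le_half : π ≤ ℓ L / 2 := by
    rcases le_total s₀ s₁ with h | h
    · linarith [pi_le_sub_of_inner_add_eq_zero hT hunit hℓ hs₀.1 h horth]
    · rw [add_comm, ← hTL] at horth
      linarith [pi_le_sub_of_inner_add_eq_zero hT hunit hℓ h hs₀.2 horth]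
  linarith

/-- Lemma 3.2 (Langer–Singer): for a C² closed unit-speed curve `γ` of length `L` in the
unit sphere `Sⁿ ⊂ ℝⁿ⁺¹` with geodesic curvature `k` (so `k s = ‖γ'' s + γ s‖`), and any
constant `a₀ ≥ 2`, one has `∫₀ᴸ (k² + a₀) ds ≥ 4π√(a₀ − 1)`. -/
theorem elastic_energy_lower_bound (n : ℕ) (L : ℝ) (hL : 0 < L)
    (γ : ℝ → EuclideanSpace ℝ (Fin (n + 1)))
    (hsm : ContDiff ℝ 2 γ)
    (hclosed : ∀ s, γ (s + L) = γ s)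
    (hsph : ∀ s, ‖γ s‖ = 1)
    (hunit : ∀ s, ‖deriv γ s‖ = 1)
    (k : ℝ → ℝ) (hk : ∀ s, k s = ‖deriv (deriv γ) s + γ s‖)
    (a₀ : ℝ) (ha₀ : 2 ≤ a₀) :
    4 * π * Real.sqrt (a₀ - 1) ≤ ∫ s in (0:ℝ)..L, (k s ^ 2 + a₀) := by
  have hγ'C1 : ContDiff ℝ 1 (deriv γ) := hsm.deriv'
  have hγ' : ∀ s, HasDerivAt γ (deriv γ s) s := fun s ↦
    (hsm.differentiable (by norm_num) s).hasDerivAt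
  have hγ'' : ∀ s, HasDerivAt (deriv γ) (deriv (deriv γ) s) s := fun s ↦
    (hγ'C1.differentiable one_ne_zero s).hasDerivAt
  have hγ''c : Continuous (deriv (deriv γ)) := hγ'C1.continuous_deriv le_rfl
  have hγ'L : deriv γ L = deriv γ 0 := by
    simpa [hclosed] using (deriv_comp_add_const (f := γ) (a := L) (x := 0)).symm
  have hfenchel := two_pi_le_integral_norm_deriv hL hγ' hγ'' hγ''c hunit
    (by simpa using hclosed 0) hγ'L
  have hamgm : ∀ s, 2 * √(a₀ - 1) * ‖deriv (deriv γ) s‖ ≤ k s ^ 2 + a₀ := fun s ↦ by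
    have h := two_mul_le_add_sq (√(a₀ - 1)) ‖deriv (deriv γ) s‖
    have hcurv := norm_add_sq_eq_norm_sq_sub_one_of_hasDerivAt hγ' hγ'' hsph hunit s
    rw [Real.sq_sqrt (by linarith)] at h
    rw [← hk] at hcurv
    linarith
  calc 4 * π * √(a₀ - 1) = 2 * √(a₀ - 1) * (2 * π) := by ring
    _ ≤ 2 * √(a₀ - 1) * ∫ s in (0 : ℝ)..L, ‖deriv (deriv γ) s‖ := by gcongr
    _ = ∫ s in (0 : ℝ)..L, 2 * √(a₀ - 1) * ‖deriv (deriv γ) s‖ := (integral_const_mul _ _).symm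
    _ ≤ ∫ s in (0 : ℝ)..L, (k s ^ 2 + a₀) := by
      refine integral_mono_on hL.le ?_ ?_ fun s _ ↦ hamgm s
      · exact (by fun_prop : Continuous _).intervalIntegrable _ _
      · have hγc : Continuous γ := hsm.continuous
        exact (by simp only [hk]; fun_prop : Continuous _).intervalIntegrable _ _
end

section
/- Let a₀ ≥ 2. Among closed curves γ in S^n achieving equality in ∫₀^L (k² + a₀) ds ≥ 4π√(a₀ − 1), the curvature k is constant equal to √(a₀ − 2). -/
/-!
The tangent indicatrix `T = γ'` is a closed curve on the unit sphere whose mean vanishes, since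
`∫₀ᴸ T = γ(L) - γ(0) = 0`. Such a curve lies in no open hemisphere, so it has length
`∫₀ᴸ ‖T'‖ ≥ 2π` (Horn's argument: cut it into two arcs of equal length; one of them contains a point
equidistant from its two endpoints, and the sum of the two spherical distances from that point is
`π`). Because `γ ⊥ γ'` and `⟪γ'', γ⟫ = -1`, we have `‖T'‖² = k² + 1`, so by AM–GM
`k² + a₀ = ‖T'‖² + (a₀ - 1) ≥ 2√(a₀ - 1) ‖T'‖`, whose integral is `≥ 4π√(a₀ - 1)`. Equality
therefore forces `‖T'‖ = √(a₀ - 1)`, i.e. `k² = a₀ - 2`, everywhere.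
-/

open Real intervalIntegral
open RealInnerProductSpace Set Filter MeasureTheory

theorem Function.Periodic.deriv {𝕜 F : Type*} [NontriviallyNormedField 𝕜] [NormedAddCommGroup F]
    [NormedSpace 𝕜 F] {f : 𝕜 → F} {c : 𝕜} (h : Function.Periodic f c) :
    Function.Periodic (deriv f) c := fun x => by
  rw [← deriv_comp_add_const, h.funext]

variable {E : Type*} [NormedAddCommGroup E] [InnerProductSpace ℝ E]

theorem inner_deriv_eq_zero_of_norm_eq_one {T : ℝ → E} {s : ℝ} (hT : DifferentiableAt ℝ T s)
    (hnorm : ∀ t, ‖T t‖ = 1) : ⟪T s, deriv T s⟫ = 0 := by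
  have h := hT.hasDerivAt.norm_sq
  simp only [hnorm, one_pow] at h
  simpa using h.unique (hasDerivAt_const s 1)

theorem inner_deriv_deriv_eq_neg_one {γ : ℝ → E} {s : ℝ} (hγ : Differentiable ℝ γ)
    (hγ' : DifferentiableAt ℝ (deriv γ) s) (hsph : ∀ t, ‖γ t‖ = 1) (hunit : ∀ t, ‖deriv γ t‖ = 1) :
    ⟪deriv (deriv γ) s, γ s⟫ = -1 := by
  have horth : (fun t => ⟪deriv γ t, γ t⟫) = fun _ => 0 := funext fun t => by
    rw [real_inner_comm, inner_deriv_eq_zero_of_norm_eq_one (hγ t) hsph]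
  have h := hγ'.hasDerivAt.inner ℝ (hγ s).hasDerivAt
  rw [horth, real_inner_self_eq_norm_sq, hunit] at h
  linarith [h.unique (hasDerivAt_const s 0)]

theorem norm_deriv_deriv_sq_eq {γ : ℝ → E} {s : ℝ} (hγ : Differentiable ℝ γ)
    (hγ' : DifferentiableAt ℝ (deriv γ) s) (hsph : ∀ t, ‖γ t‖ = 1) (hunit : ∀ t, ‖deriv γ t‖ = 1) :
    ‖deriv (deriv γ) s‖ ^ 2 = ‖deriv (deriv γ) s + γ s‖ ^ 2 + 1 := by
  rw [norm_add_sq_real, inner_deriv_deriv_eq_neg_one hγ hγ' hsph hunit, hsph]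
  ring

theorem abs_inner_le_norm_mul_sqrt {u x v : E} (hu : ‖u‖ = 1) (hx : ‖x‖ = 1) (hxv : ⟪x, v⟫ = 0) :
    |⟪u, v⟫| ≤ ‖v‖ * √(1 - ⟪u, x⟫ ^ 2) := by
  have hproj : ⟪u - ⟪u, x⟫ • x, v⟫ = ⟪u, v⟫ := by
    rw [inner_sub_left, real_inner_smul_left, hxv, mul_zero, sub_zero]
  have hnorm : ‖u - ⟪u, x⟫ • x‖ = √(1 - ⟪u, x⟫ ^ 2) := by
    rw [← sqrt_sq (norm_nonneg _), norm_sub_sq_real, real_inner_smul_right, norm_smul, hu, hx,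
      norm_eq_abs, mul_one, sq_abs]
    ring_nf
  calc |⟪u, v⟫| = |⟪u - ⟪u, x⟫ • x, v⟫| := by rw [hproj]
    _ ≤ ‖u - ⟪u, x⟫ • x‖ * ‖v‖ := abs_real_inner_le_norm _ _
    _ = ‖v‖ * √(1 - ⟪u, x⟫ ^ 2) := by rw [hnorm, mul_comm]

theorem exists_mem_Ioo_eq_zero_of_integral_eq_zero {f : ℝ → ℝ} {a b : ℝ} (hf : Continuous f)
    (hab : a < b) (h : ∫ s in a..b, f s = 0) : ∃ t ∈ Ioo a b, f t = 0 := by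
  have hprim : ∀ x, HasDerivAt (fun x => ∫ s in a..x, f s) (f x) x := fun x =>
    integral_hasDerivAt_right (hf.intervalIntegrable a x) (hf.stronglyMeasurableAtFilter _ _)
      hf.continuousAt
  exact exists_hasDerivAt_eq_zero hab
    (continuous_iff_continuousAt.2 fun x => (hprim x).continuousAt).continuousOn
    (by rw [integral_same, h]) fun x _ => hprim x

theorem eqOn_of_integral_le_integral {f g : ℝ → ℝ} {a b : ℝ} (hab : a < b)
    (hf : ContinuousOn f (Icc a b)) (hg : ContinuousOn g (Icc a b))
    (hle : ∀ x ∈ Icc a b, f x ≤ g x) (hint : ∫ x in a..b, g x ≤ ∫ x in a..b, f x) :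
    EqOn f g (Icc a b) := by
  intro x hx
  by_contra hne
  exact (integral_lt_integral_of_continuousOn_of_le_of_exists_lt hab hf hg
    (fun y hy => hle y (Ioc_subset_Icc_self hy)) ⟨x, hx, (hle x hx).lt_of_ne hne⟩).not_ge hint

/-- The factor `c < 1` keeps `arccos` away from `±1`, where it is not differentiable. -/
theorem arccos_mul_inner_sub_le_integral {T : ℝ → E} (hT : ContDiff ℝ 1 T)
    (hnorm : ∀ s, ‖T s‖ = 1) {u : E} (hu : ‖u‖ = 1) {c : ℝ} (hc₀ : 0 < c) (hc₁ : c < 1)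
    {a b : ℝ} (hab : a ≤ b) :
    arccos (c * ⟪u, T b⟫) - arccos (c * ⟪u, T a⟫) ≤ ∫ s in a..b, ‖deriv T s‖ := by
  have hTd : Differentiable ℝ T := hT.differentiable one_ne_zero
  have hinner_le : ∀ s, |⟪u, T s⟫| ≤ 1 := fun s => by
    simpa [hu, hnorm] using abs_real_inner_le_norm u (T s)
  have hlt : ∀ s, |c * ⟪u, T s⟫| < 1 := fun s => by
    rw [abs_mul, abs_of_pos hc₀]
    nlinarith [hinner_le s, abs_nonneg ⟪u, T s⟫]
  have hderiv : ∀ s, HasDerivAt (fun s => arccos (c * ⟪u, T s⟫))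
      (-(1 / √(1 - (c * ⟪u, T s⟫) ^ 2)) * (c * ⟪u, deriv T s⟫)) s := fun s => by
    obtain ⟨h₁, h₂⟩ := abs_lt.1 (hlt s)
    have hinner := ((hasDerivAt_const s u).inner ℝ (hTd s).hasDerivAt).const_mul c
    simp only [inner_zero_left, add_zero] at hinner
    exact HasDerivAt.comp (h₂ := arccos) s (hasDerivAt_arccos h₁.ne' h₂.ne) hinner
  refine sub_le_integral_of_hasDeriv_right_of_le hab
    (fun s _ => (hderiv s).continuousAt.continuousWithinAt)
    (fun s _ => (hderiv s).hasDerivWithinAt) hT.continuous_deriv_one.norm.integrableOn_Icc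
    fun s _ => ?_
  set h := ⟪u, T s⟫
  set I := ⟪u, deriv T s⟫
  have hA : 0 < √(1 - (c * h) ^ 2) :=
    sqrt_pos.2 (by nlinarith [sq_abs (c * h), abs_nonneg (c * h), hlt s])
  have hI : c * |I| ≤ √(1 - (c * h) ^ 2) * ‖deriv T s‖ :=
    calc c * |I| ≤ c * (‖deriv T s‖ * √(1 - h ^ 2)) := by
          gcongr
          exact abs_inner_le_norm_mul_sqrt hu (hnorm s)
            (inner_deriv_eq_zero_of_norm_eq_one (hTd s) hnorm)
      _ = √(c ^ 2 * (1 - h ^ 2)) * ‖deriv T s‖ := by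
          rw [sqrt_mul (sq_nonneg c), sqrt_sq hc₀.le]; ring
      _ ≤ √(1 - (c * h) ^ 2) * ‖deriv T s‖ := by
          gcongr
          nlinarith
  calc -(1 / √(1 - (c * h) ^ 2)) * (c * I) = c * -I / √(1 - (c * h) ^ 2) := by ring
    _ ≤ c * |I| / √(1 - (c * h) ^ 2) := by gcongr; exact neg_le_abs I
    _ ≤ ‖deriv T s‖ := by rw [div_le_iff₀ hA]; linarith

theorem arccos_inner_sub_le_integral {T : ℝ → E} (hT : ContDiff ℝ 1 T)
    (hnorm : ∀ s, ‖T s‖ = 1) {u : E} (hu : ‖u‖ = 1) {a b : ℝ} (hab : a ≤ b) :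
    arccos ⟪u, T b⟫ - arccos ⟪u, T a⟫ ≤ ∫ s in a..b, ‖deriv T s‖ := by
  have hcont : Continuous fun c : ℝ => arccos (c * ⟪u, T b⟫) - arccos (c * ⟪u, T a⟫) := by
    fun_prop
  simpa using le_of_tendsto ((hcont.tendsto 1).mono_left nhdsWithin_le_nhds)
    (eventually_of_mem (Ioo_mem_nhdsLT one_pos) fun c hc =>
      arccos_mul_inner_sub_le_integral hT hnorm hu hc.1 hc.2 hab)

theorem arccos_inner_le_integral_norm_deriv {T : ℝ → E} (hT : ContDiff ℝ 1 T)
    (hnorm : ∀ s, ‖T s‖ = 1) {a b : ℝ} (hab : a ≤ b) :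
    arccos ⟪T a, T b⟫ ≤ ∫ s in a..b, ‖deriv T s‖ := by
  simpa [real_inner_self_eq_norm_sq, hnorm] using
    arccos_inner_sub_le_integral hT hnorm (hnorm a) hab

theorem pi_le_integral_norm_deriv_of_inner_add_eq_zero {T : ℝ → E} (hT : ContDiff ℝ 1 T)
    (hnorm : ∀ s, ‖T s‖ = 1) {a t b : ℝ} (hat : a ≤ t) (htb : t ≤ b)
    (hperp : ⟪T a + T b, T t⟫ = 0) : π ≤ ∫ s in a..b, ‖deriv T s‖ := by
  have hanti : ⟪T t, T b⟫ = -⟪T a, T t⟫ := by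
    rw [inner_add_left] at hperp
    rw [real_inner_comm]
    linarith
  have hcont := hT.continuous_deriv_one.norm
  rw [← integral_add_adjacent_intervals (hcont.intervalIntegrable a t)
    (hcont.intervalIntegrable t b)]
  have h₁ := arccos_inner_le_integral_norm_deriv hT hnorm hat
  have h₂ := arccos_inner_le_integral_norm_deriv hT hnorm htb
  rw [hanti, arccos_neg] at h₂
  linarith

theorem two_pi_le_integral_norm_deriv_s3 [CompleteSpace E] {T : ℝ → E} (hT : ContDiff ℝ 1 T)
    (hnorm : ∀ s, ‖T s‖ = 1) {a b : ℝ} (hab : a < b) (hper : T b = T a)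
    (hmean : ∫ s in a..b, T s = 0) : 2 * π ≤ ∫ s in a..b, ‖deriv T s‖ := by
  set ℓ := ∫ s in a..b, ‖deriv T s‖
  have hcont := hT.continuous_deriv_one.norm
  have hsplit : ∀ m, (∫ s in a..m, ‖deriv T s‖) + ∫ s in m..b, ‖deriv T s‖ = ℓ := fun m =>
    integral_add_adjacent_intervals (hcont.intervalIntegrable a m) (hcont.intervalIntegrable m b)
  obtain ⟨m, hm, hhalf⟩ : ℓ / 2 ∈ (fun x => ∫ s in a..x, ‖deriv T s‖) '' Icc a b := by
    refine intermediate_value_Icc hab.le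
      (continuous_primitive hcont.intervalIntegrable a).continuousOn ?_
    have : 0 ≤ ℓ := integral_nonneg hab.le fun s _ => norm_nonneg _
    constructor
    · rw [integral_same]; linarith
    · linarith
  -- The mean of `T` vanishes, so `T` meets the great sphere orthogonal to `T a + T m`.
  obtain ⟨t, ht, hperp⟩ : ∃ t ∈ Ioo a b, ⟪T a + T m, T t⟫ = 0 := by
    refine exists_mem_Ioo_eq_zero_of_integral_eq_zero (continuous_const.inner hT.continuous) hab ?_
    rw [← inner_zero_right (T a + T m), ← hmean]
    exact (innerSL ℝ (T a + T m)).intervalIntegral_comp_comm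
      (hT.continuous.intervalIntegrable a b)
  rcases le_total t m with htm | hmt
  · have := pi_le_integral_norm_deriv_of_inner_add_eq_zero hT hnorm ht.1.le htm hperp
    linarith
  · have := pi_le_integral_norm_deriv_of_inner_add_eq_zero hT hnorm hmt ht.2.le
      (by rwa [hper, add_comm])
    linarith [hsplit m]

/-- Equality case of the elastic energy inequality: if a C² closed unit-speed curve in `Sⁿ`
achieves equality in `∫₀ᴸ (k² + a₀) ds ≥ 4π√(a₀ − 1)` (with `a₀ ≥ 2`), then its geodesic
curvature is constant equal to `√(a₀ − 2)`. -/
theorem elastic_energy_equality_case (n : ℕ) (L : ℝ) (hL : 0 < L)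
    (γ : ℝ → EuclideanSpace ℝ (Fin (n + 1)))
    (hsm : ContDiff ℝ 2 γ)
    (hclosed : ∀ s, γ (s + L) = γ s)
    (hsph : ∀ s, ‖γ s‖ = 1)
    (hunit : ∀ s, ‖deriv γ s‖ = 1)
    (k : ℝ → ℝ) (hk : ∀ s, k s = ‖deriv (deriv γ) s + γ s‖)
    (a₀ : ℝ) (ha₀ : 2 ≤ a₀)
    (heq : ∫ s in (0:ℝ)..L, (k s ^ 2 + a₀) = 4 * π * Real.sqrt (a₀ - 1)) :
    ∀ s, k s = Real.sqrt (a₀ - 2) := by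
  set T := deriv γ
  have hγ : Differentiable ℝ γ := hsm.differentiable (by norm_num)
  have hT : ContDiff ℝ 1 T := ContDiff.deriv' (n := 1) hsm
  have hTper : Function.Periodic T L := Function.Periodic.deriv hclosed
  have hkper : Function.Periodic k L := fun s => by rw [hk, hk, hTper.deriv, hclosed]
  have hcurv : ∀ s, ‖deriv T s‖ ^ 2 = k s ^ 2 + 1 := fun s => by
    rw [hk, norm_deriv_deriv_sq_eq hγ ((hT.differentiable one_ne_zero) s) hsph hunit]
  have hmean : ∫ s in (0:ℝ)..L, T s = 0 := by
    rw [integral_deriv_eq_sub (fun s _ => hγ s) (hT.continuous.intervalIntegrable 0 L),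
      ← zero_add L, hclosed, sub_self]
  have hlength := two_pi_le_integral_norm_deriv_s3 hT hunit hL (by simpa using hTper 0) hmean
  set b := √(a₀ - 1)
  have hb : b ^ 2 = a₀ - 1 := sq_sqrt (by linarith)
  have hamgm : ∀ s, 2 * b * ‖deriv T s‖ ≤ k s ^ 2 + a₀ := fun s => by
    nlinarith [sq_nonneg (‖deriv T s‖ - b), hcurv s]
  have hT' : Continuous (deriv T) := hT.continuous_deriv_one
  have hkc : Continuous k := (hT'.add hγ.continuous).norm.congr fun s => (hk s).symm
  have hequal := eqOn_of_integral_le_integral hL (by fun_prop) (by fun_prop) (fun s _ => hamgm s)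
    (by rw [heq, intervalIntegral.integral_const_mul]; nlinarith [sqrt_nonneg (a₀ - 1)])
  intro s
  obtain ⟨t, ht, hst⟩ := hkper.exists_mem_Ico₀ hL s
  rw [hst]
  have hspeed : ‖deriv T t‖ = b := by nlinarith [hequal (Ico_subset_Icc_self ht), hcurv t]
  have hk_sq : k t ^ 2 = a₀ - 2 := by
    rw [← hspeed] at hb
    linarith [hcurv t]
  rw [← hk_sq, sqrt_sq (hk t ▸ norm_nonneg _)]
end

section
/- Let γ : ℝ → ℝ^{n+1} be a closed curve in S^n parametrized by arc length with geodesic curvature k₁, and for 0 < a ≤ 1, b = √(1−a²), define γ_a(θ) = (a·γ(θ/a), b) ∈ ℝ^{n+2}. Then γ_a is a curve in S^{n+1} parametrized by arc length, and its geodesic curvature at θ equals (1/a)·√(k₁(θ/a)² + 1 − a²) — in particular, when comparing energies, ∫ over γ_a of (geodesic curvature)² dθ = (1/a)∫ over γ of (k₁² + 1 − a²) ds. -/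
/-!
With `a² + b² = 1` the curve `γ_a θ = (a γ(θ/a), b)` stays on the unit sphere, and the chain rule
gives `γ_a' = (γ'(θ/a), 0)` and `γ_a'' = (a⁻¹ γ''(θ/a), 0)`. Differentiating `‖γ‖² = 1` twice with
`‖γ'‖ = 1` shows that `X = γ'' + γ` is orthogonal to `γ`, so
`γ_a'' + γ_a = (a⁻¹ X + (a - a⁻¹) γ, b)` has squared norm
`a⁻² k₁² + (a - a⁻¹)² + b² = a⁻² (k₁² + 1 - a²)`.
The energy identity is then the substitution `s = θ / a`.
-/

open Real intervalIntegral
open scoped InnerProductSpace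

section SphericalCurve

variable {F : Type*} [NormedAddCommGroup F] [InnerProductSpace ℝ F]

lemma inner_eq_zero_of_hasDerivAt_of_norm_eq_const {f : ℝ → F} {f' : F} {t c : ℝ}
    (hf : HasDerivAt f f' t) (hc : ∀ s, ‖f s‖ = c) : ⟪f t, f'⟫_ℝ = 0 := by
  have hconst : HasDerivAt (fun s => ‖f s‖ ^ 2) 0 t := by
    simpa only [hc] using hasDerivAt_const t (c ^ 2)
  simpa using hf.norm_sq.unique hconst

lemma inner_deriv_deriv_add_self_eq_zero {γ : ℝ → F} (hγ : Differentiable ℝ γ)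
    (hγ' : Differentiable ℝ (deriv γ)) (hsph : ∀ s, ‖γ s‖ = 1) (hunit : ∀ s, ‖deriv γ s‖ = 1)
    (s : ℝ) : ⟪deriv (deriv γ) s + γ s, γ s⟫_ℝ = 0 := by
  have horth : ∀ t, ⟪γ t, deriv γ t⟫_ℝ = 0 := fun t =>
    inner_eq_zero_of_hasDerivAt_of_norm_eq_const (hγ t).hasDerivAt hsph
  have hconst : HasDerivAt (fun t => ⟪γ t, deriv γ t⟫_ℝ) 0 s := by
    simpa only [horth] using hasDerivAt_const s (0 : ℝ)
  have hsum := ((hγ s).hasDerivAt.inner ℝ (hγ' s).hasDerivAt).unique hconst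
  rw [real_inner_self_eq_norm_sq, hunit] at hsum
  rw [inner_add_left, real_inner_comm, real_inner_self_eq_norm_sq, hsph]
  linarith

end SphericalCurve

lemma HasDerivAt.comp_div_const {F : Type*} [NormedAddCommGroup F] [NormedSpace ℝ F]
    {f : ℝ → F} {f' : F} {a θ : ℝ} (hf : HasDerivAt f f' (θ / a)) :
    HasDerivAt (fun t => f (t / a)) (a⁻¹ • f') θ := by
  simpa [Function.comp_def] using hf.scomp θ ((hasDerivAt_id θ).div_const a)

noncomputable def euclideanSnoc (n : ℕ) :
    EuclideanSpace ℝ (Fin n) × ℝ →L[ℝ] EuclideanSpace ℝ (Fin (n + 1)) :=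
  LinearMap.toContinuousLinearMap
    { toFun := fun p => WithLp.toLp 2 (Fin.snoc (α := fun _ => ℝ) p.1 p.2)
      map_add' := fun p q => by
        ext i
        refine Fin.lastCases ?_ (fun _ => ?_) i <;> simp
      map_smul' := fun c p => by
        ext i
        refine Fin.lastCases ?_ (fun _ => ?_) i <;> simp }

namespace euclideanSnoc

variable {n : ℕ}

@[simp]
lemma apply_castSucc (x : EuclideanSpace ℝ (Fin n)) (c : ℝ) (i : Fin n) :
    euclideanSnoc n (x, c) i.castSucc = x i := by
  simp [euclideanSnoc]

@[simp]
lemma apply_last (x : EuclideanSpace ℝ (Fin n)) (c : ℝ) :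
    euclideanSnoc n (x, c) (Fin.last n) = c := by
  simp [euclideanSnoc]

lemma norm_sq (x : EuclideanSpace ℝ (Fin n)) (c : ℝ) :
    ‖euclideanSnoc n (x, c)‖ ^ 2 = ‖x‖ ^ 2 + c ^ 2 := by
  simp [EuclideanSpace.norm_sq_eq, Fin.sum_univ_castSucc]

lemma hasDerivAt_const_snd {f : ℝ → EuclideanSpace ℝ (Fin n)} {f' : EuclideanSpace ℝ (Fin n)}
    {t : ℝ} (c : ℝ) (hf : HasDerivAt f f' t) :
    HasDerivAt (fun s => euclideanSnoc n (f s, c)) (euclideanSnoc n (f', 0)) t :=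
  (euclideanSnoc n).hasFDerivAt.comp_hasDerivAt t (hf.prodMk (hasDerivAt_const t c))

end euclideanSnoc

noncomputable def rescaledLift {n : ℕ} (γ : ℝ → EuclideanSpace ℝ (Fin n)) (a b θ : ℝ) :
    EuclideanSpace ℝ (Fin (n + 1)) :=
  euclideanSnoc n (a • γ (θ / a), b)

section RescaledLift

variable {n : ℕ} {γ : ℝ → EuclideanSpace ℝ (Fin n)} {a b : ℝ}

lemma hasDerivAt_rescaledLift (ha : a ≠ 0) (hγ : Differentiable ℝ γ) (θ : ℝ) :
    HasDerivAt (rescaledLift γ a b) (euclideanSnoc n (deriv γ (θ / a), 0)) θ := by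
  have hscaled := ((hγ (θ / a)).hasDerivAt.comp_div_const).const_smul a
  rw [smul_smul, mul_inv_cancel₀ ha, one_smul] at hscaled
  exact euclideanSnoc.hasDerivAt_const_snd b hscaled

lemma deriv_rescaledLift (ha : a ≠ 0) (hγ : Differentiable ℝ γ) :
    deriv (rescaledLift γ a b) = fun θ => euclideanSnoc n (deriv γ (θ / a), 0) :=
  funext fun θ => (hasDerivAt_rescaledLift ha hγ θ).deriv

lemma deriv_deriv_rescaledLift (ha : a ≠ 0) (hγ : Differentiable ℝ γ)
    (hγ' : Differentiable ℝ (deriv γ)) (θ : ℝ) :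
    deriv (deriv (rescaledLift γ a b)) θ =
      euclideanSnoc n (a⁻¹ • deriv (deriv γ) (θ / a), 0) := by
  rw [deriv_rescaledLift ha hγ]
  exact (euclideanSnoc.hasDerivAt_const_snd 0 (hγ' (θ / a)).hasDerivAt.comp_div_const).deriv

lemma norm_rescaledLift (hab : a ^ 2 + b ^ 2 = 1) (hsph : ∀ s, ‖γ s‖ = 1) (θ : ℝ) :
    ‖rescaledLift γ a b θ‖ = 1 := by
  have hsq : ‖rescaledLift γ a b θ‖ ^ 2 = 1 := by
    rw [rescaledLift, euclideanSnoc.norm_sq, norm_smul, hsph, mul_one, norm_eq_abs, sq_abs, hab]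
  exact (pow_eq_one_iff_of_nonneg (norm_nonneg _) two_ne_zero).mp hsq

lemma norm_deriv_rescaledLift (ha : a ≠ 0) (hγ : Differentiable ℝ γ)
    (hunit : ∀ s, ‖deriv γ s‖ = 1) (θ : ℝ) : ‖deriv (rescaledLift γ a b) θ‖ = 1 := by
  have hsq : ‖deriv (rescaledLift γ a b) θ‖ ^ 2 = 1 := by
    rw [deriv_rescaledLift ha hγ, euclideanSnoc.norm_sq, hunit]
    norm_num
  exact (pow_eq_one_iff_of_nonneg (norm_nonneg _) two_ne_zero).mp hsq

lemma norm_deriv_deriv_rescaledLift_add_sq (ha : a ≠ 0) (hab : a ^ 2 + b ^ 2 = 1)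
    (hγ : Differentiable ℝ γ) (hγ' : Differentiable ℝ (deriv γ)) (hsph : ∀ s, ‖γ s‖ = 1)
    (hunit : ∀ s, ‖deriv γ s‖ = 1) (θ : ℝ) :
    ‖deriv (deriv (rescaledLift γ a b)) θ + rescaledLift γ a b θ‖ ^ 2 =
      a⁻¹ ^ 2 * (‖deriv (deriv γ) (θ / a) + γ (θ / a)‖ ^ 2 + 1 - a ^ 2) := by
  set s := θ / a
  set X := deriv (deriv γ) s + γ s
  have hsplit : deriv (deriv (rescaledLift γ a b)) θ + rescaledLift γ a b θ =
      euclideanSnoc n (a⁻¹ • X + (a - a⁻¹) • γ s, b) := by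
    rw [deriv_deriv_rescaledLift ha hγ hγ', rescaledLift, ← map_add, Prod.mk_add_mk, zero_add]
    congr 2
    module
  have horth : ⟪a⁻¹ • X, (a - a⁻¹) • γ s⟫_ℝ = 0 := by
    rw [real_inner_smul_left, real_inner_smul_right,
      inner_deriv_deriv_add_self_eq_zero hγ hγ' hsph hunit, mul_zero, mul_zero]
  rw [hsplit, euclideanSnoc.norm_sq, norm_add_sq_real, horth, norm_smul, norm_smul, hsph,
    norm_eq_abs, norm_eq_abs, mul_pow, mul_pow, sq_abs, sq_abs]
  field_simp
  linear_combination (a ^ 2) * hab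

end RescaledLift

theorem rescaled_curve_curvature_general (n : ℕ) (L : ℝ)
    (γ : ℝ → EuclideanSpace ℝ (Fin (n + 1)))
    (hsm : ContDiff ℝ 2 γ)
    (hsph : ∀ s, ‖γ s‖ = 1)
    (hunit : ∀ s, ‖deriv γ s‖ = 1)
    (k₁ : ℝ → ℝ) (hk : ∀ s, k₁ s = ‖deriv (deriv γ) s + γ s‖)
    (a b : ℝ) (ha : 0 < a) (ha1 : a ≤ 1) (hb : b = Real.sqrt (1 - a^2))
    (γa : ℝ → EuclideanSpace ℝ (Fin (n + 2)))
    (hγa : ∀ θ (i : Fin (n + 2)), γa θ i =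
      if h : (i : ℕ) < n + 1 then a * γ (θ / a) ⟨(i : ℕ), h⟩ else b) :
    (∀ θ, ‖γa θ‖ = 1) ∧
    (∀ θ, ‖deriv γa θ‖ = 1) ∧
    (∀ θ, ‖deriv (deriv γa) θ + γa θ‖ =
      (1 / a) * Real.sqrt (k₁ (θ / a) ^ 2 + 1 - a ^ 2)) ∧
    (∫ θ in (0:ℝ)..(a * L), ‖deriv (deriv γa) θ + γa θ‖ ^ 2) =
      (1 / a) * ∫ s in (0:ℝ)..L, (k₁ s ^ 2 + 1 - a ^ 2) := by
  have hγ : Differentiable ℝ γ := hsm.differentiable (by norm_num)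
  have hγ' : Differentiable ℝ (deriv γ) := hsm.differentiable_deriv_two
  have hab : a ^ 2 + b ^ 2 = 1 := by
    rw [hb, sq_sqrt (by nlinarith)]
    ring
  obtain rfl : γa = rescaledLift γ a b := by
    funext θ
    ext i
    refine Fin.lastCases ?_ (fun _ => ?_) i <;> simp [hγa, rescaledLift, Fin.is_le]
  have hcurv_sq (θ : ℝ) := norm_deriv_deriv_rescaledLift_add_sq ha.ne' hab hγ hγ' hsph hunit θ
  have hcurv (θ : ℝ) : ‖deriv (deriv (rescaledLift γ a b)) θ + rescaledLift γ a b θ‖ =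
      (1 / a) * √(k₁ (θ / a) ^ 2 + 1 - a ^ 2) := by
    rw [← sqrt_sq (norm_nonneg _), hcurv_sq, ← hk, sqrt_mul (by positivity),
      sqrt_sq (by positivity), one_div]
  refine ⟨norm_rescaledLift hab hsph, norm_deriv_rescaledLift ha.ne' hγ hunit, hcurv, ?_⟩
  simp_rw [hcurv_sq, ← hk]
  rw [integral_const_mul, integral_comp_div (fun s => k₁ s ^ 2 + 1 - a ^ 2) ha.ne', zero_div,
    mul_div_cancel_left₀ _ ha.ne', smul_eq_mul]
  field_simp

/-- Rescaling a closed unit-speed spherical curve `γ ⊂ Sⁿ` into the sphere of radius `a`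
and appending the constant `b = √(1−a²)` gives a unit-speed curve `γ_a ⊂ Sⁿ⁺¹` whose
geodesic curvature at `θ` is `(1/a)·√(k₁(θ/a)² + 1 − a²)`; consequently the curvature
energy satisfies `∫ over γ_a of k² dθ = (1/a)·∫ over γ of (k₁² + 1 − a²) ds`. -/
theorem rescaled_curve_curvature (n : ℕ) (L : ℝ) (hL : 0 < L)
    (γ : ℝ → EuclideanSpace ℝ (Fin (n + 1)))
    (hsm : ContDiff ℝ 2 γ)
    (hclosed : ∀ s, γ (s + L) = γ s)
    (hsph : ∀ s, ‖γ s‖ = 1)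
    (hunit : ∀ s, ‖deriv γ s‖ = 1)
    (k₁ : ℝ → ℝ) (hk : ∀ s, k₁ s = ‖deriv (deriv γ) s + γ s‖)
    (a b : ℝ) (ha : 0 < a) (ha1 : a ≤ 1) (hb : b = Real.sqrt (1 - a^2))
    (γa : ℝ → EuclideanSpace ℝ (Fin (n + 2)))
    (hγa : ∀ θ (i : Fin (n + 2)), γa θ i =
      if h : (i : ℕ) < n + 1 then a * γ (θ / a) ⟨(i : ℕ), h⟩ else b) :
    (∀ θ, ‖γa θ‖ = 1) ∧
    (∀ θ, ‖deriv γa θ‖ = 1) ∧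
    (∀ θ, ‖deriv (deriv γa) θ + γa θ‖ =
      (1 / a) * Real.sqrt (k₁ (θ / a) ^ 2 + 1 - a ^ 2)) ∧
    (∫ θ in (0:ℝ)..(a * L), ‖deriv (deriv γa) θ + γa θ‖ ^ 2) =
      (1 / a) * ∫ s in (0:ℝ)..L, (k₁ s ^ 2 + 1 - a ^ 2) :=
  rescaled_curve_curvature_general n L γ hsm hsph hunit k₁ hk a b ha ha1 hb γa hγa
end

section
/- Let λ ∈ ℝ, a,b > 0 with a² + b² = 1, and define γ(s) = (a cos(s/c), a sin(s/c), b cos(λs/c), b sin(λs/c)) with c = √(a² + b²λ²). Then γ is a unit-speed curve in S³, its geodesic curvature k₁ satisfies k₁² = a²b²(λ² − 1)²/(a² + b²λ²)², and (when k₁ ≠ 0) its torsion k₂ satisfies k₂² = λ²/(a² + b²λ²)². -/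
/-!
In complex coordinates `γ(s) = (a e^{is/c}, b e^{iλs/c})` is a line on a flat torus. Such lines
and their multiples by `i` span a family closed under differentiation, which acts diagonally on
the two coefficients, so the Frenet equations reduce to algebra on coefficients. With
`ω₁ = 1/c`, `ω₂ = λ/c`, the relations `a² + b² = 1` and `ω₁²a² + ω₂²b² = 1` (unit speed) give
`γ'' + γ = μ N` and `N' + μ γ' = ω₁ω₂ B` with `μ = (ω₂² - ω₁²) a b`, where `N` and `B` are the
unit torus lines with coefficients `(b, -a)` and `i (ω₂ b, -ω₁ a)`. Hence `k₁ = |μ| = ab|λ² - 1|/c²`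
and `k₂ = ω₁ω₂ = λ/c²`.
-/

open Real

lemma hasDerivAt_toLp {ι : Type*} [Fintype ι] {f : ℝ → ι → ℝ} {f' : ι → ℝ} {s : ℝ}
    (hf : ∀ i, HasDerivAt (fun t => f t i) (f' i) s) :
    HasDerivAt (fun t => WithLp.toLp 2 (f t)) (WithLp.toLp 2 f') s :=
  (PiLp.continuousLinearEquiv 2 ℝ _).symm.hasFDerivAt.comp_hasDerivAt s (hasDerivAt_pi.2 hf)

lemma hasDerivAt_mul_cos_mul (p ω s : ℝ) :
    HasDerivAt (fun t => p * cos (ω * t)) (-(ω * p) * sin (ω * s)) s :=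
  ((((hasDerivAt_id' s).const_mul ω).cos).const_mul p).congr_deriv (by ring)

lemma hasDerivAt_mul_sin_mul (p ω s : ℝ) :
    HasDerivAt (fun t => p * sin (ω * t)) (ω * p * cos (ω * s)) s :=
  ((((hasDerivAt_id' s).const_mul ω).sin).const_mul p).congr_deriv (by ring)

lemma abs_sign_of_ne_zero {x : ℝ} (hx : x ≠ 0) : |(SignType.sign x : ℝ)| = 1 := by
  rcases hx.lt_or_gt with h | h <;> simp [h]

section

variable {E : Type*} [NormedAddCommGroup E] [NormedSpace ℝ E]

/-- Replacing the normal `N` by `sign μ • N` turns a signed curvature `μ` into `|μ|`. -/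
lemma exists_frenet_frame_of_signed {γ N B : ℝ → E} {μ τ : ℝ} (hμ : μ ≠ 0)
    (hN : ∀ s, ‖N s‖ = 1) (hB : ∀ s, ‖B s‖ = 1)
    (hγ'' : ∀ s, deriv (deriv γ) s = μ • N s - γ s)
    (hN' : ∀ s, deriv N s = τ • B s - μ • deriv γ s) :
    ∃ β₁ β₂ : ℝ → E, (∀ s, ‖β₁ s‖ = 1) ∧ (∀ s, ‖β₂ s‖ = 1) ∧
      (∀ s, deriv (deriv γ) s = |μ| • β₁ s - γ s) ∧
      (∀ s, deriv β₁ s = τ • β₂ s - |μ| • deriv γ s) := by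
  set σ : ℝ := (SignType.sign μ : ℝ)
  refine ⟨σ • N, fun s => σ • B s, fun s => ?_, fun s => ?_, fun s => ?_, fun s => ?_⟩
  · simp [norm_smul, hN, abs_sign_of_ne_zero hμ, σ]
  · simp [norm_smul, hB, abs_sign_of_ne_zero hμ, σ]
  · rw [hγ'', Pi.smul_apply, smul_smul, abs_mul_sign]
  · rw [deriv_const_smul_field, hN', smul_sub, smul_comm σ τ, smul_smul σ μ, sign_mul_self]

end

noncomputable section

/-- In complex coordinates `ℝ⁴ ≅ ℂ²` this is `s ↦ (p e^{iω₁s}, q e^{iω₂s})`. -/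
def torusLine (ω₁ ω₂ p q s : ℝ) : EuclideanSpace ℝ (Fin 4) :=
  !₂[p * cos (ω₁ * s), p * sin (ω₁ * s), q * cos (ω₂ * s), q * sin (ω₂ * s)]

/-- `s ↦ (i p e^{iω₁s}, i q e^{iω₂s})`. -/
def torusLineJ (ω₁ ω₂ p q s : ℝ) : EuclideanSpace ℝ (Fin 4) :=
  !₂[-(p * sin (ω₁ * s)), p * cos (ω₁ * s), -(q * sin (ω₂ * s)), q * cos (ω₂ * s)]

end

variable {ω₁ ω₂ : ℝ}

lemma hasDerivAt_torusLine (p q s : ℝ) :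
    HasDerivAt (torusLine ω₁ ω₂ p q) (torusLineJ ω₁ ω₂ (ω₁ * p) (ω₂ * q) s) s := by
  refine hasDerivAt_toLp fun i => ?_
  fin_cases i
  · simpa using hasDerivAt_mul_cos_mul p ω₁ s
  · simpa using hasDerivAt_mul_sin_mul p ω₁ s
  · simpa using hasDerivAt_mul_cos_mul q ω₂ s
  · simpa using hasDerivAt_mul_sin_mul q ω₂ s

lemma hasDerivAt_torusLineJ (p q s : ℝ) :
    HasDerivAt (torusLineJ ω₁ ω₂ p q) (torusLine ω₁ ω₂ (-(ω₁ * p)) (-(ω₂ * q)) s) s := by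
  refine hasDerivAt_toLp fun i => ?_
  fin_cases i
  · simpa using (hasDerivAt_mul_sin_mul p ω₁ s).fun_neg
  · simpa using hasDerivAt_mul_cos_mul p ω₁ s
  · simpa using (hasDerivAt_mul_sin_mul q ω₂ s).fun_neg
  · simpa using hasDerivAt_mul_cos_mul q ω₂ s

lemma deriv_torusLine (p q : ℝ) :
    deriv (torusLine ω₁ ω₂ p q) = torusLineJ ω₁ ω₂ (ω₁ * p) (ω₂ * q) :=
  funext fun s => (hasDerivAt_torusLine p q s).deriv

lemma deriv_torusLineJ (p q : ℝ) :
    deriv (torusLineJ ω₁ ω₂ p q) = torusLine ω₁ ω₂ (-(ω₁ * p)) (-(ω₂ * q)) :=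
  funext fun s => (hasDerivAt_torusLineJ p q s).deriv

lemma norm_torusLine (p q s : ℝ) : ‖torusLine ω₁ ω₂ p q s‖ = √(p ^ 2 + q ^ 2) := by
  simp only [torusLine, EuclideanSpace.norm_eq, Fin.sum_univ_four, Real.norm_eq_abs, sq_abs]
  congr 1
  simp only [Fin.isValue, Matrix.cons_val_zero, Matrix.cons_val_one, Matrix.cons_val]
  linear_combination p ^ 2 * sin_sq_add_cos_sq (ω₁ * s) + q ^ 2 * sin_sq_add_cos_sq (ω₂ * s)

lemma norm_torusLineJ (p q s : ℝ) : ‖torusLineJ ω₁ ω₂ p q s‖ = √(p ^ 2 + q ^ 2) := by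
  simp only [torusLineJ, EuclideanSpace.norm_eq, Fin.sum_univ_four, Real.norm_eq_abs, sq_abs]
  congr 1
  simp only [Fin.isValue, Matrix.cons_val_zero, Matrix.cons_val_one, Matrix.cons_val]
  linear_combination p ^ 2 * sin_sq_add_cos_sq (ω₁ * s) + q ^ 2 * sin_sq_add_cos_sq (ω₂ * s)

lemma smul_torusLine (r p q s : ℝ) :
    r • torusLine ω₁ ω₂ p q s = torusLine ω₁ ω₂ (r * p) (r * q) s := by
  ext i; fin_cases i <;> simp [torusLine] <;> ring

lemma torusLine_sub (p q p' q' s : ℝ) :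
    torusLine ω₁ ω₂ p q s - torusLine ω₁ ω₂ p' q' s = torusLine ω₁ ω₂ (p - p') (q - q') s := by
  ext i; fin_cases i <;> simp [torusLine] <;> ring

lemma smul_torusLineJ (r p q s : ℝ) :
    r • torusLineJ ω₁ ω₂ p q s = torusLineJ ω₁ ω₂ (r * p) (r * q) s := by
  ext i; fin_cases i <;> simp [torusLineJ] <;> ring

lemma torusLineJ_sub (p q p' q' s : ℝ) :
    torusLineJ ω₁ ω₂ p q s - torusLineJ ω₁ ω₂ p' q' s = torusLineJ ω₁ ω₂ (p - p') (q - q') s := by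
  ext i; fin_cases i <;> simp [torusLineJ] <;> ring

section Frenet

variable {a b : ℝ}

lemma deriv_deriv_torusLine (hab : a ^ 2 + b ^ 2 = 1)
    (hspeed : ω₁ ^ 2 * a ^ 2 + ω₂ ^ 2 * b ^ 2 = 1) (s : ℝ) :
    deriv (deriv (torusLine ω₁ ω₂ a b)) s =
      ((ω₂ ^ 2 - ω₁ ^ 2) * a * b) • torusLine ω₁ ω₂ b (-a) s - torusLine ω₁ ω₂ a b s := by
  rw [deriv_torusLine, deriv_torusLineJ, smul_torusLine, torusLine_sub]
  congr 2
  · linear_combination ω₁ ^ 2 * a * hab - a * hspeed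
  · linear_combination ω₂ ^ 2 * b * hab - b * hspeed

lemma deriv_torusLine_normal (hab : a ^ 2 + b ^ 2 = 1)
    (hspeed : ω₁ ^ 2 * a ^ 2 + ω₂ ^ 2 * b ^ 2 = 1) (s : ℝ) :
    deriv (torusLine ω₁ ω₂ b (-a)) s =
      (ω₁ * ω₂) • torusLineJ ω₁ ω₂ (ω₂ * b) (-(ω₁ * a)) s
        - ((ω₂ ^ 2 - ω₁ ^ 2) * a * b) • deriv (torusLine ω₁ ω₂ a b) s := by
  rw [deriv_torusLine, deriv_torusLine, smul_torusLineJ, smul_torusLineJ, torusLineJ_sub]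
  congr 2
  · linear_combination ω₁ * ω₂ ^ 2 * b * hab - ω₁ * b * hspeed
  · linear_combination ω₂ * a * hspeed - ω₁ ^ 2 * ω₂ * a * hab

lemma norm_deriv_deriv_torusLine_add_self (hab : a ^ 2 + b ^ 2 = 1)
    (hspeed : ω₁ ^ 2 * a ^ 2 + ω₂ ^ 2 * b ^ 2 = 1) (s : ℝ) :
    ‖deriv (deriv (torusLine ω₁ ω₂ a b)) s + torusLine ω₁ ω₂ a b s‖ =
      |(ω₂ ^ 2 - ω₁ ^ 2) * a * b| := by
  rw [deriv_deriv_torusLine hab hspeed, sub_add_cancel, norm_smul, norm_torusLine, neg_sq,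
    add_comm, hab, sqrt_one, mul_one, Real.norm_eq_abs]

theorem exists_frenet_frame_torusLine (hab : a ^ 2 + b ^ 2 = 1)
    (hspeed : ω₁ ^ 2 * a ^ 2 + ω₂ ^ 2 * b ^ 2 = 1)
    (hμ : (ω₂ ^ 2 - ω₁ ^ 2) * a * b ≠ 0) :
    ∃ β₁ β₂ : ℝ → EuclideanSpace ℝ (Fin 4), (∀ s, ‖β₁ s‖ = 1) ∧ (∀ s, ‖β₂ s‖ = 1) ∧
      (∀ s, deriv (deriv (torusLine ω₁ ω₂ a b)) s =
        |(ω₂ ^ 2 - ω₁ ^ 2) * a * b| • β₁ s - torusLine ω₁ ω₂ a b s) ∧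
      (∀ s, deriv β₁ s = (ω₁ * ω₂) • β₂ s -
        |(ω₂ ^ 2 - ω₁ ^ 2) * a * b| • deriv (torusLine ω₁ ω₂ a b) s) :=
  exists_frenet_frame_of_signed hμ
    (fun s => by rw [norm_torusLine, neg_sq, add_comm, hab, sqrt_one])
    (fun s => by rw [norm_torusLineJ, neg_sq, mul_pow, mul_pow, add_comm, hspeed, sqrt_one])
    (deriv_deriv_torusLine hab hspeed) (deriv_torusLine_normal hab hspeed)

end Frenet

theorem homogeneous_curve_invariants_general (lam a b c : ℝ) (ha : 0 < a)
    (hab : a^2 + b^2 = 1) (hc : c = Real.sqrt (a^2 + b^2 * lam^2))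
    (γ : ℝ → EuclideanSpace ℝ (Fin 4))
    (hγ : ∀ s, γ s = (WithLp.equiv 2 (Fin 4 → ℝ)).symm
      ![a * Real.cos (s/c), a * Real.sin (s/c),
        b * Real.cos (lam * s / c), b * Real.sin (lam * s / c)])
    (k₁ : ℝ → ℝ) (hk₁ : ∀ s, k₁ s = ‖deriv (deriv γ) s + γ s‖) :
    (∀ s, ‖γ s‖ = 1) ∧
    (∀ s, ‖deriv γ s‖ = 1) ∧
    (∀ s, k₁ s ^ 2 = a^2 * b^2 * (lam^2 - 1)^2 / (a^2 + b^2 * lam^2)^2) ∧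
    ((∀ s, k₁ s ≠ 0) →
      ∃ (β₁ β₂ : ℝ → EuclideanSpace ℝ (Fin 4)) (k₂ : ℝ → ℝ),
        (∀ s, ‖β₁ s‖ = 1) ∧ (∀ s, ‖β₂ s‖ = 1) ∧
        (∀ s, deriv (deriv γ) s = k₁ s • β₁ s - γ s) ∧
        (∀ s, deriv β₁ s = k₂ s • β₂ s - k₁ s • deriv γ s) ∧
        (∀ s, k₂ s ^ 2 = lam^2 / (a^2 + b^2 * lam^2)^2)) := by
  have hc2 : c ^ 2 = a ^ 2 + b ^ 2 * lam ^ 2 := by rw [hc, sq_sqrt (by positivity)]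
  have hc0 : c ≠ 0 := by rw [hc]; positivity
  have hγ_eq : γ = torusLine c⁻¹ (lam / c) a b := by
    funext s; rw [hγ, div_eq_inv_mul s, mul_div_right_comm lam s c]; rfl
  have hspeed : c⁻¹ ^ 2 * a ^ 2 + (lam / c) ^ 2 * b ^ 2 = 1 := by
    field_simp; linear_combination -hc2
  have hμ : ((lam / c) ^ 2 - c⁻¹ ^ 2) * a * b = a * b * (lam ^ 2 - 1) / (a^2 + b^2 * lam^2) := by
    rw [← hc2]; field_simp
  subst hγ_eq
  have hk₁_eq : ∀ s, k₁ s = |((lam / c) ^ 2 - c⁻¹ ^ 2) * a * b| := fun s => by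
    rw [hk₁, norm_deriv_deriv_torusLine_add_self hab hspeed]
  refine ⟨fun s => by rw [norm_torusLine, hab, sqrt_one],
    fun s => by rw [deriv_torusLine, norm_torusLineJ, mul_pow, mul_pow, hspeed, sqrt_one],
    fun s => by rw [hk₁_eq, sq_abs, hμ, div_pow, mul_pow, mul_pow], fun hk => ?_⟩
  obtain ⟨β₁, β₂, hβ₁, hβ₂, hγ'', hβ₁'⟩ := exists_frenet_frame_torusLine hab hspeed
    (abs_ne_zero.1 (hk₁_eq 0 ▸ hk 0))
  refine ⟨β₁, β₂, fun _ => c⁻¹ * (lam / c), hβ₁, hβ₂, fun s => by rw [hk₁_eq, hγ''],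
    fun s => by rw [hk₁_eq, hβ₁'], fun s => ?_⟩
  rw [← hc2]; field_simp

/-- The homogeneous curve `γ(s) = (a cos(s/c), a sin(s/c), b cos(λs/c), b sin(λs/c))`,
`c = √(a² + b²λ²)`, is a unit-speed curve in `S³` with geodesic curvature
`k₁² = a²b²(λ²−1)²/(a²+b²λ²)²` and (when `k₁ ≠ 0`) torsion
`k₂² = λ²/(a²+b²λ²)²`. -/
theorem homogeneous_curve_invariants (lam a b c : ℝ) (ha : 0 < a) (hb : 0 < b)
    (hab : a^2 + b^2 = 1) (hc : c = Real.sqrt (a^2 + b^2 * lam^2))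
    (γ : ℝ → EuclideanSpace ℝ (Fin 4))
    (hγ : ∀ s, γ s = (WithLp.equiv 2 (Fin 4 → ℝ)).symm
      ![a * Real.cos (s/c), a * Real.sin (s/c),
        b * Real.cos (lam * s / c), b * Real.sin (lam * s / c)])
    (k₁ : ℝ → ℝ) (hk₁ : ∀ s, k₁ s = ‖deriv (deriv γ) s + γ s‖) :
    (∀ s, ‖γ s‖ = 1) ∧
    (∀ s, ‖deriv γ s‖ = 1) ∧
    (∀ s, k₁ s ^ 2 = a^2 * b^2 * (lam^2 - 1)^2 / (a^2 + b^2 * lam^2)^2) ∧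
    ((∀ s, k₁ s ≠ 0) →
      ∃ (β₁ β₂ : ℝ → EuclideanSpace ℝ (Fin 4)) (k₂ : ℝ → ℝ),
        (∀ s, ‖β₁ s‖ = 1) ∧ (∀ s, ‖β₂ s‖ = 1) ∧
        (∀ s, deriv (deriv γ) s = k₁ s • β₁ s - γ s) ∧
        (∀ s, deriv β₁ s = k₂ s • β₂ s - k₁ s • deriv γ s) ∧
        (∀ s, k₂ s ^ 2 = lam^2 / (a^2 + b^2 * lam^2)^2)) :=
  homogeneous_curve_invariants_general lam a b c ha hab hc γ hγ k₁ hk₁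
end
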